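/- arXiv:2603.21759 — 5 statements merged into one kernel-verified Lean document; each statement's English description precedes it below -/
import Mathlib

section
/- Let p be a partition of [k], let κ be a crossing of p, and let x ∈ [k] lie in the same block of p as some element of κ. Then there exists a crossing κ' of p with x ∈ κ'. -/
/-- The block relation of a finite partition of `Fin n` (partition of `[n]`):
`x ∼_p y` iff `x` and `y` lie in the same block of `p`. -/
def PartRel {n : ℕ} (p : Finpartition (Finset.univ : Finset (Fin n))) (x y : Fin n) : Prop :=
  ∃ B ∈ p.parts, x ∈ B ∧ y ∈ B

/-- `κ` is a crossing of the relation `r`: `κ = {a,b,c,d}` with `a < b < c < d`,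
`r a c`, `r b d`, and `¬ r a b`. -/
def IsCross {n : ℕ} (r : Fin n → Fin n → Prop) (κ : Finset (Fin n)) : Prop :=
  ∃ a b c d : Fin n, a < b ∧ b < c ∧ c < d ∧ κ = {a, b, c, d} ∧ r a c ∧ r b d ∧ ¬ r a b

/-- `cr p`: the set of crossings of the partition `p`. -/
def cr {n : ℕ} (p : Finpartition (Finset.univ : Finset (Fin n))) : Set (Finset (Fin n)) :=
  {κ | IsCross (PartRel p) κ}

/-! Let `a < b < c < d` be a crossing, with `a ∼ c`, `b ∼ d` and `a ≁ b`. A point `x ∼ a` is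
neither `b` nor `d`; it replaces `a` if `x < b`, replaces `c` if `b < x < d`, and if `d < x` then
`b < c < d < x` is a crossing. Points `x ∼ b` are handled symmetrically. -/

theorem PartRel.equivalence {n : ℕ} (p : Finpartition (Finset.univ : Finset (Fin n))) :
    Equivalence (PartRel p) where
  refl x := ⟨p.part x, p.part_mem.2 (Finset.mem_univ x),
    p.mem_part (Finset.mem_univ x), p.mem_part (Finset.mem_univ x)⟩
  symm := fun ⟨B, hB, hx, hy⟩ ↦ ⟨B, hB, hy, hx⟩
  trans := fun ⟨B, hB, hx, hy⟩ ⟨_, hB', hy', hz⟩ ↦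
    ⟨B, hB, hx, p.eq_of_mem_parts hB hB' hy hy' ▸ hz⟩

section Crossing

variable {n : ℕ} {r : Fin n → Fin n → Prop} {a b c d x : Fin n}

theorem exists_isCross_mem_of_rel_left (hr : Equivalence r) (hab : a < b) (hbc : b < c)
    (hcd : c < d) (hac : r a c) (hbd : r b d) (hnab : ¬ r a b) (hxa : r x a) :
    ∃ κ, IsCross r κ ∧ x ∈ κ := by
  have hxc : r x c := hr.trans hxa hac
  have hnxb : ¬ r x b := fun h ↦ hnab (hr.trans (hr.symm hxa) h)
  rcases lt_trichotomy x b with hxb | rfl | hbx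
  · exact ⟨_, ⟨x, b, c, d, hxb, hbc, hcd, rfl, hxc, hbd, hnxb⟩, by simp⟩
  · exact absurd (hr.refl x) hnxb
  rcases lt_trichotomy x d with hxd | rfl | hdx
  · exact ⟨_, ⟨a, b, x, d, hab, hbx, hxd, rfl, hr.symm hxa, hbd, hnab⟩, by simp⟩
  · exact absurd (hr.symm hbd) hnxb
  · have hnbc : ¬ r b c := fun h ↦ hnab (hr.trans hac (hr.symm h))
    exact ⟨_, ⟨b, c, d, x, hbc, hcd, hdx, rfl, hbd, hr.symm hxc, hnbc⟩, by simp⟩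

theorem exists_isCross_mem_of_rel_right (hr : Equivalence r) (hab : a < b) (hbc : b < c)
    (hcd : c < d) (hac : r a c) (hbd : r b d) (hnab : ¬ r a b) (hxb : r x b) :
    ∃ κ, IsCross r κ ∧ x ∈ κ := by
  have hxd : r x d := hr.trans hxb hbd
  have hnax : ¬ r a x := fun h ↦ hnab (hr.trans h hxb)
  rcases lt_trichotomy x a with hxa | rfl | hax
  · exact ⟨_, ⟨x, a, b, c, hxa, hab, hbc, rfl, hxb, hac, fun h ↦ hnax (hr.symm h)⟩, by simp⟩
  · exact absurd (hr.refl x) hnax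
  rcases lt_trichotomy x c with hxc | rfl | hcx
  · exact ⟨_, ⟨a, x, c, d, hax, hxc, hcd, rfl, hac, hxd, hnax⟩, by simp⟩
  · exact absurd hac hnax
  · exact ⟨_, ⟨a, b, c, x, hab, hbc, hcx, rfl, hac, hr.symm hxb, hnab⟩, by simp⟩

theorem IsCross.exists_isCross_mem_of_rel (hr : Equivalence r) {κ : Finset (Fin n)}
    (hκ : IsCross r κ) {e : Fin n} (he : e ∈ κ) (hxe : r x e) :
    ∃ κ', IsCross r κ' ∧ x ∈ κ' := by
  obtain ⟨a, b, c, d, hab, hbc, hcd, rfl, hac, hbd, hnab⟩ := hκ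
  simp only [Finset.mem_insert, Finset.mem_singleton] at he
  rcases he with rfl | rfl | rfl | rfl
  · exact exists_isCross_mem_of_rel_left hr hab hbc hcd hac hbd hnab hxe
  · exact exists_isCross_mem_of_rel_right hr hab hbc hcd hac hbd hnab hxe
  · exact exists_isCross_mem_of_rel_left hr hab hbc hcd hac hbd hnab (hr.trans hxe (hr.symm hac))
  · exact exists_isCross_mem_of_rel_right hr hab hbc hcd hac hbd hnab (hr.trans hxe (hr.symm hbd))

end Crossing

/-- if `κ` is a crossing of `p` and `x` lies in the same block of `p`
as some element of `κ`, then there is a crossing of `p` containing `x`. -/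
theorem stmt0 {k : ℕ} (p : Finpartition (Finset.univ : Finset (Fin k)))
    (κ : Finset (Fin k)) (hκ : κ ∈ cr p)
    (x : Fin k) (hx : ∃ e ∈ κ, PartRel p x e) :
    ∃ κ' ∈ cr p, x ∈ κ' := by
  obtain ⟨e, he, hxe⟩ := hx
  exact hκ.exists_isCross_mem_of_rel (PartRel.equivalence p) he hxe
end

section
/- Let p and q be partitions of [k] with cr(p) = cr(q). Then χ(p) = χ(q), and for all x, y ∈ χ(p), x ∼_p y if and only if x ∼_q y; that is, the restrictions of p and q to their common set of crossers coincide. -/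
/-- `crossers p` (`χ(p)`): the union of all crossings of `p`. -/
def crossers {n : ℕ} (p : Finpartition (Finset.univ : Finset (Fin n))) : Set (Fin n) :=
  {x | ∃ κ ∈ cr p, x ∈ κ}

/-!
Every crosser `x` of `p` lies on an arc `x – x'` of its block that is crossed by an arc `s – t`
of another block, and since this crossing is also one of `q`, `x ∼_q x'` as well. If `y ∼_p x`,
then `y` lies on the other side of the chord `s – t` than one of `x`, `x'`; that point, `y`, `s`
and `t` form a crossing of `p`, hence of `q`, which puts `y` into the `q`-block of `x`.
-/

namespace PartRel

variable {n : ℕ} {p : Finpartition (Finset.univ : Finset (Fin n))} {x y z : Fin n}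

protected theorem refl (p : Finpartition (Finset.univ : Finset (Fin n))) (x : Fin n) :
    PartRel p x x :=
  let ⟨B, hB, hx⟩ := p.exists_mem (Finset.mem_univ x)
  ⟨B, hB, hx, hx⟩

protected theorem symm (h : PartRel p x y) : PartRel p y x :=
  let ⟨B, hB, hx, hy⟩ := h
  ⟨B, hB, hy, hx⟩

protected theorem trans (hxy : PartRel p x y) (hyz : PartRel p y z) : PartRel p x z := by
  obtain ⟨B, hB, hx, hy⟩ := hxy
  obtain ⟨C, hC, hy', hz⟩ := hyz
  exact ⟨B, hB, hx, p.eq_of_mem_parts hB hC hy hy' ▸ hz⟩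

end PartRel

theorem eq_of_sorted_insert_eq {n : ℕ} {a b c d a' b' c' d' : Fin n}
    (hab : a < b) (hbc : b < c) (hcd : c < d) (hab' : a' < b') (hbc' : b' < c') (hcd' : c' < d')
    (h : ({a, b, c, d} : Finset (Fin n)) = {a', b', c', d'}) :
    a = a' ∧ b = b' ∧ c = c' ∧ d = d' := by
  have hmem := Finset.ext_iff.mp h
  simp only [Finset.mem_insert, Finset.mem_singleton] at hmem
  have ha := (hmem a).mp (by simp)
  have hb := (hmem b).mp (by simp)
  have hc := (hmem c).mp (by simp)
  have hd := (hmem d).mp (by simp)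
  have ha' := (hmem a').mpr (by simp)
  have hd' := (hmem d').mpr (by simp)
  simp only [Fin.ext_iff, Fin.lt_def] at *
  omega

theorem isCross_insert_iff {n : ℕ} {r : Fin n → Fin n → Prop} {a b c d : Fin n}
    (hab : a < b) (hbc : b < c) (hcd : c < d) :
    IsCross r {a, b, c, d} ↔ r a c ∧ r b d ∧ ¬ r a b := by
  constructor
  · rintro ⟨a', b', c', d', hab', hbc', hcd', h, hac, hbd, hnab⟩
    obtain ⟨rfl, rfl, rfl, rfl⟩ := eq_of_sorted_insert_eq hab hbc hcd hab' hbc' hcd' h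
    exact ⟨hac, hbd, hnab⟩
  · rintro ⟨hac, hbd, hnab⟩
    exact ⟨a, b, c, d, hab, hbc, hcd, rfl, hac, hbd, hnab⟩

section SameCrossings

variable {n : ℕ} {p q : Finpartition (Finset.univ : Finset (Fin n))}

theorem partRel_of_separated (h : cr p = cr q) {a b s t : Fin n} (hab : PartRel p a b)
    (hst : PartRel p s t) (has : ¬ PartRel p a s) (hsa : s < a) (hat : a < t)
    (hb : b < s ∨ t < b) : PartRel q a b := by
  rcases hb with hbs | htb
  · have hκ : ({b, s, a, t} : Finset (Fin n)) ∈ cr p :=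
      (isCross_insert_iff hbs hsa hat).2 ⟨hab.symm, hst, fun hbs => has (hab.trans hbs)⟩
    rw [h] at hκ
    exact ((isCross_insert_iff hbs hsa hat).1 hκ).1.symm
  · have hκ : ({s, a, t, b} : Finset (Fin n)) ∈ cr p :=
      (isCross_insert_iff hsa hat htb).2 ⟨hst, hab, fun hsa => has hsa.symm⟩
    rw [h] at hκ
    exact ((isCross_insert_iff hsa hat htb).1 hκ).2.1

theorem exists_separating_chord (h : cr p = cr q) {x : Fin n} (hx : x ∈ crossers p) :
    ∃ s t i o, s < i ∧ i < t ∧ (o < s ∨ t < o) ∧ PartRel p s t ∧ ¬ PartRel p x s ∧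
      PartRel p x i ∧ PartRel q x i ∧ PartRel p x o ∧ PartRel q x o := by
  obtain ⟨κ, hκp, hxκ⟩ := hx
  have hκq : κ ∈ cr q := h ▸ hκp
  obtain ⟨a, b, c, d, hab, hbc, hcd, rfl, pac, pbd, npab⟩ := hκp
  obtain ⟨qac, qbd, -⟩ := (isCross_insert_iff hab hbc hcd).1 hκq
  simp only [Finset.mem_insert, Finset.mem_singleton] at hxκ
  rcases hxκ with rfl | rfl | rfl | rfl
  · exact ⟨b, d, c, x, hbc, hcd, .inl hab, pbd, npab, pac, qac, .refl p x, .refl q x⟩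
  · exact ⟨a, c, x, d, hab, hbc, .inr hcd, pac, fun h => npab h.symm, .refl p x, .refl q x,
      pbd, qbd⟩
  · exact ⟨b, d, x, a, hbc, hcd, .inl hab, pbd, fun h => npab (pac.trans h), .refl p x,
      .refl q x, pac.symm, qac.symm⟩
  · exact ⟨a, c, b, x, hab, hbc, .inr hcd, pac, fun h => npab (pbd.trans h).symm, pbd.symm,
      qbd.symm, .refl p x, .refl q x⟩

theorem PartRel.of_mem_crossers (h : cr p = cr q) {x y : Fin n} (hx : x ∈ crossers p)
    (hxy : PartRel p x y) : PartRel q x y := by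
  obtain ⟨s, t, i, o, hsi, hit, ho, hst, hxs, pxi, qxi, pxo, qxo⟩ := exists_separating_chord h hx
  have hys : ¬ PartRel p y s := fun hys => hxs (hxy.trans hys)
  by_cases hy : s < y ∧ y < t
  · exact qxo.trans (partRel_of_separated h (hxy.symm.trans pxo) hst hys hy.1 hy.2 ho).symm
  · have hy_s : y ≠ s := by rintro rfl; exact hys (.refl p y)
    have hy_t : y ≠ t := by rintro rfl; exact hys hst.symm
    have hy' : y < s ∨ t < y := by simp only [Fin.lt_def, Fin.ext_iff, ne_eq] at *; omega
    exact qxi.trans <| partRel_of_separated h (pxi.symm.trans hxy) hst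
      (fun his => hxs (pxi.trans his)) hsi hit hy'

end SameCrossings

/-- if `cr p = cr q`, then `χ(p) = χ(q)` and the restrictions of `p`
and `q` to the common set of crossers coincide. -/
theorem stmt1 {k : ℕ} (p q : Finpartition (Finset.univ : Finset (Fin k)))
    (h : cr p = cr q) :
    crossers p = crossers q ∧
      ∀ x ∈ crossers p, ∀ y ∈ crossers p, (PartRel p x y ↔ PartRel q x y) := by
  have hχ : crossers p = crossers q := by rw [crossers, crossers, h]
  exact ⟨hχ, fun x hx y _ =>
    ⟨PartRel.of_mem_crossers h hx, PartRel.of_mem_crossers h.symm (hχ ▸ hx)⟩⟩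
end

section
/- Let N and k be positive integers with k ≤ N. Then, inside ((Fin k → Fin N) → ℂ), the span of {ξ_p : p ∈ NC(k)} and the span of {ξ_p : p ∈ CR(k)} intersect trivially: span{ξ_p : p ∈ NC(k)} ∩ span{ξ_p : p ∈ CR(k)} = {0}. Consequently, every vector in span{ξ_p : p a partition of [k]} decomposes uniquely as the sum of a vector in the noncrossing span and a vector in the crossing span. -/
open scoped Classical

/-- The vector `ξ_p ∈ (ℂ^N)^{⊗k}`, identified with `(Fin k → Fin N) → ℂ`:
its coordinate at `i` is `1` if `i` is constant on every block of `p`, else `0`. -/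
noncomputable def xi (N : ℕ) {k : ℕ} (p : Finpartition (Finset.univ : Finset (Fin k))) :
    (Fin k → Fin N) → ℂ :=
  fun i => if ∀ x y, PartRel p x y → i x = i y then 1 else 0

/-- The span of the noncrossing-partition vectors `ξ_p`, `p ∈ NC(k)`. -/
noncomputable def ncSpan (N k : ℕ) : Submodule ℂ ((Fin k → Fin N) → ℂ) :=
  Submodule.span ℂ
    {v | ∃ p : Finpartition (Finset.univ : Finset (Fin k)), cr p = ∅ ∧ v = xi N p}

/-- The span of the crossing-partition vectors `ξ_p`, `p ∈ CR(k)`. -/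
noncomputable def crSpan (N k : ℕ) : Submodule ℂ ((Fin k → Fin N) → ℂ) :=
  Submodule.span ℂ
    {v | ∃ p : Finpartition (Finset.univ : Finset (Fin k)), (cr p).Nonempty ∧ v = xi N p}

/-- The span of all partition vectors `ξ_p`, `p ∈ P(k)`. -/
noncomputable def allSpan (N k : ℕ) : Submodule ℂ ((Fin k → Fin N) → ℂ) :=
  Submodule.span ℂ
    {v | ∃ p : Finpartition (Finset.univ : Finset (Fin k)), v = xi N p}

/-! For `k ≤ N` the vectors `ξ_p` are linearly independent. Labelling the blocks of `p`
injectively by elements of `[N]` gives a tuple `i_p` with `ξ_q(i_p) = 1` exactly when `q` refines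
`p`, so evaluation at these tuples is unitriangular for the refinement order. Since `NC(k)` and
`CR(k)` partition the set of all partitions, the two spans are then complementary inside the span
of all `ξ_p`. -/

theorem Submodule.eq_and_eq_of_add_eq_add_of_disjoint {R M : Type*} [Ring R] [AddCommGroup M]
    [Module R M] {p q : Submodule R M} (hpq : Disjoint p q) {a a' b b' : M} (ha : a ∈ p)
    (ha' : a' ∈ p) (hb : b ∈ q) (hb' : b' ∈ q) (h : a + b = a' + b') : a = a' ∧ b = b' := by
  have hdiff : a - a' = b' - b := by rw [sub_eq_sub_iff_add_eq_add, h, add_comm]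
  have hzero : a - a' = 0 :=
    Submodule.disjoint_def.mp hpq _ (p.sub_mem ha ha') (hdiff ▸ q.sub_mem hb' hb)
  obtain rfl := sub_eq_zero.mp hzero
  exact ⟨rfl, add_left_cancel h⟩

theorem Submodule.exists_unique_add_of_disjoint {R M : Type*} [Ring R] [AddCommGroup M]
    [Module R M] {p q : Submodule R M} (hpq : Disjoint p q) {v : M} (hv : v ∈ p ⊔ q) :
    ∃ a ∈ p, ∃ b ∈ q, v = a + b ∧ ∀ a' ∈ p, ∀ b' ∈ q, v = a' + b' → a' = a ∧ b' = b := by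
  obtain ⟨a, ha, b, hb, rfl⟩ := Submodule.mem_sup.mp hv
  refine ⟨a, ha, b, hb, rfl, fun a' ha' b' hb' h => ?_⟩
  obtain ⟨rfl, rfl⟩ := Submodule.eq_and_eq_of_add_eq_add_of_disjoint hpq ha ha' hb hb' h
  exact ⟨rfl, rfl⟩

theorem linearIndependent_of_eval_triangular {ι α R : Type*} [PartialOrder ι] [CommRing R]
    [NoZeroDivisors R] (v : ι → α → R) (e : ι → α) (hdiag : ∀ p, v p (e p) ≠ 0)
    (htri : ∀ p q, v q (e p) ≠ 0 → q ≤ p) : LinearIndependent R v := by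
  rw [linearIndependent_iff']
  by_contra! ⟨s, g, hsum, i, hi, hgi⟩
  obtain ⟨q, hq, hqmin⟩ := (s.filter (g · ≠ 0)).exists_minimal ⟨i, by simp [hi, hgi]⟩
  rw [Finset.mem_filter] at hq
  have heval : ∑ p ∈ s, g p * v p (e q) = g q * v q (e q) := by
    refine Finset.sum_eq_single q (fun p hp hpq => ?_) (absurd hq.1)
    by_contra hne
    have hle : p ≤ q := htri q p (right_ne_zero_of_mul hne)
    exact hpq (le_antisymm hle (hqmin (by simp [hp, left_ne_zero_of_mul hne]) hle))
  have := congrFun hsum (e q)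
  simp only [Finset.sum_apply, Pi.smul_apply, smul_eq_mul, Pi.zero_apply, heval] at this
  exact mul_ne_zero hq.2 (hdiag q) this

section BlockLabel

variable {N k : ℕ}

noncomputable def blockLabel (hkN : k ≤ N) (p : Finpartition (Finset.univ : Finset (Fin k)))
    (x : Fin k) : Fin N :=
  Fin.castLE (p.card_parts_le_card.trans (by simpa using hkN))
    (p.parts.equivFin ⟨p.part x, p.part_mem.mpr (Finset.mem_univ x)⟩)

theorem blockLabel_eq_iff (hkN : k ≤ N) (p : Finpartition (Finset.univ : Finset (Fin k)))
    (x y : Fin k) : blockLabel hkN p x = blockLabel hkN p y ↔ p.part x = p.part y := by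
  simp [blockLabel, Fin.castLE_inj]

theorem partRel_imp_blockLabel_eq_iff_le (hkN : k ≤ N)
    (p q : Finpartition (Finset.univ : Finset (Fin k))) :
    (∀ x y, PartRel q x y → blockLabel hkN p x = blockLabel hkN p y) ↔ q ≤ p := by
  simp only [blockLabel_eq_iff]
  constructor
  · intro h B hB
    obtain ⟨x, hx⟩ := q.nonempty_of_mem_parts hB
    refine ⟨p.part x, p.part_mem.mpr (Finset.mem_univ x), fun y hy => ?_⟩
    exact h x y ⟨B, hB, hx, hy⟩ ▸ p.mem_part (Finset.mem_univ y)
  · rintro hqp x y ⟨B, hB, hx, hy⟩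
    obtain ⟨C, hC, hBC⟩ := hqp hB
    rw [p.part_eq_of_mem hC (hBC hx), p.part_eq_of_mem hC (hBC hy)]

theorem xi_blockLabel (hkN : k ≤ N) (p q : Finpartition (Finset.univ : Finset (Fin k))) :
    xi N q (blockLabel hkN p) = if q ≤ p then 1 else 0 :=
  if_congr (partRel_imp_blockLabel_eq_iff_le hkN p q) rfl rfl

theorem linearIndependent_xi (hkN : k ≤ N) :
    LinearIndependent ℂ (fun p : Finpartition (Finset.univ : Finset (Fin k)) => xi N p) :=
  linearIndependent_of_eval_triangular _ (blockLabel hkN) (fun p => by simp [xi_blockLabel])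
    (fun p q h => by by_contra hqp; simp [xi_blockLabel, hqp] at h)

end BlockLabel

theorem ncSpan_eq_span_image (N k : ℕ) :
    ncSpan N k = Submodule.span ℂ (xi N '' {p | cr p = ∅}) := by
  simp only [ncSpan, Set.image, Set.mem_ofPred_eq, eq_comm]

theorem crSpan_eq_span_image (N k : ℕ) :
    crSpan N k = Submodule.span ℂ (xi N '' {p | (cr p).Nonempty}) := by
  simp only [crSpan, Set.image, Set.mem_ofPred_eq, eq_comm]

theorem disjoint_ncSpan_crSpan {N k : ℕ} (hkN : k ≤ N) : Disjoint (ncSpan N k) (crSpan N k) := by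
  rw [ncSpan_eq_span_image, crSpan_eq_span_image]
  exact (linearIndependent_xi hkN).disjoint_span_image
    (Set.disjoint_left.mpr fun _ hnc hcr => hcr.ne_empty hnc)

theorem allSpan_le_ncSpan_sup_crSpan (N k : ℕ) : allSpan N k ≤ ncSpan N k ⊔ crSpan N k := by
  refine Submodule.span_le.mpr ?_
  rintro _ ⟨p, rfl⟩
  rcases (cr p).eq_empty_or_nonempty with hp | hp
  · exact Submodule.mem_sup_left (Submodule.subset_span ⟨p, hp, rfl⟩)
  · exact Submodule.mem_sup_right (Submodule.subset_span ⟨p, hp, rfl⟩)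

theorem stmt5_general (N k : ℕ) (hkN : k ≤ N) :
    ncSpan N k ⊓ crSpan N k = ⊥ ∧
      ∀ v ∈ allSpan N k, ∃ a ∈ ncSpan N k, ∃ b ∈ crSpan N k, v = a + b ∧
        ∀ a' ∈ ncSpan N k, ∀ b' ∈ crSpan N k, v = a' + b' → a' = a ∧ b' = b :=
  ⟨disjoint_iff.mp (disjoint_ncSpan_crSpan hkN), fun _ hv =>
    Submodule.exists_unique_add_of_disjoint (disjoint_ncSpan_crSpan hkN)
      (allSpan_le_ncSpan_sup_crSpan N k hv)⟩

/-- for `k ≤ N`, the noncrossing span and the crossing span intersect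
trivially, and every vector in the span of all partition vectors decomposes uniquely
as a sum of a noncrossing-span vector and a crossing-span vector. -/
theorem stmt5 (N k : ℕ) (hN : 0 < N) (hk : 0 < k) (hkN : k ≤ N) :
    ncSpan N k ⊓ crSpan N k = ⊥ ∧
      ∀ v ∈ allSpan N k, ∃ a ∈ ncSpan N k, ∃ b ∈ crSpan N k, v = a + b ∧
        ∀ a' ∈ ncSpan N k, ∀ b' ∈ crSpan N k, v = a' + b' → a' = a ∧ b' = b :=
  stmt5_general N k hkN
end

section
/- At parameter N = 3, the vector ξ_c of the crossing partition c = {{1,3},{2,4}} of [4] lies in the span of the noncrossing-partition vectors: ξ_c ∈ span{ξ_p : p ∈ NC(4)} inside ((Fin 4 → Fin 3) → ℂ). -/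
open scoped Classical

/-!
Write `δ(i)` for the indicator that `i : Fin 4 → Fin 3` takes four distinct values. Möbius
inversion on the partition lattice gives `δ = ∑_q μ(0̂, q) ξ_q`, with `q` ranging over all
fifteen partitions of `[4]`, and `δ = 0` by pigeonhole since `N = 3 < 4`. The only crossing
partition of `[4]` is `c = {{1,3},{2,4}}`, and `μ(0̂, c) = 1`, so this relation solves for `ξ_c`
as a combination of noncrossing `ξ_q`.
-/

noncomputable def partOf {n m : ℕ} (f : Fin n → Fin m) :
    Finpartition (Finset.univ : Finset (Fin n)) :=
  Finpartition.ofSetoid (Setoid.ker f)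

lemma partRel_partOf {n m : ℕ} (f : Fin n → Fin m) (x y : Fin n) :
    PartRel (partOf f) x y ↔ f x = f y := by
  rw [PartRel, ← Finpartition.mem_part_iff_exists, partOf, Finpartition.mem_part_ofSetoid_iff_rel]
  exact eq_comm

lemma xi_eq_of_partRel_iff {N k : ℕ} {p q : Finpartition (Finset.univ : Finset (Fin k))}
    (h : ∀ x y, PartRel p x y ↔ PartRel q x y) : xi N p = xi N q := by
  funext i
  exact if_congr (forall_congr' fun x => forall_congr' fun y => imp_congr (h x y) Iff.rfl) rfl rfl

lemma xi_partOf_apply {N n m : ℕ} (f : Fin n → Fin m) (i : Fin n → Fin N) :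
    xi N (partOf f) i = if ∀ x y, f x = f y → i x = i y then 1 else 0 :=
  if_congr (forall_congr' fun x => forall_congr' fun y => imp_congr (partRel_partOf f x y) Iff.rfl)
    rfl rfl

lemma xi_partOf_mem_ncSpan {N n m : ℕ} {f : Fin n → Fin m}
    (h : ∀ a b c d, a < b → b < c → c < d → f a = f c → f b = f d → f a = f b) :
    xi N (partOf f) ∈ ncSpan N n := by
  refine Submodule.subset_span ⟨partOf f, ?_, rfl⟩
  refine Set.eq_empty_of_forall_notMem fun κ ⟨a, b, c, d, hab, hbc, hcd, _, hac, hbd, hnab⟩ => ?_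
  simp only [partRel_partOf] at hac hbd hnab
  exact hnab (h a b c d hab hbc hcd hac hbd)

/-- Labelings of the fifteen partitions of `[4]`, the crossing one first. -/
def partitionLabels4 : Fin 15 → Fin 4 → Fin 4 :=
  ![![0,1,0,1], ![0,0,0,0], ![0,1,1,1], ![0,0,1,1], ![0,1,0,0], ![0,1,2,2], ![0,0,0,1],
    ![0,1,1,0], ![0,1,1,2], ![0,0,1,0], ![0,1,2,1], ![0,0,1,2], ![0,1,0,2], ![0,1,2,0],
    ![0,1,2,3]]

/-- `μ(0̂, q) = ∏_{B ∈ q} (-1)^(|B|-1) (|B|-1)!` for the partition `q` labeled by `f`; an empty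
fibre contributes `(-1)^0 0! = 1` because `0 - 1 = 0` in `ℕ`. -/
def mobiusFromBot {n m : ℕ} (f : Fin n → Fin m) : ℤ :=
  ∏ v : Fin m, (-1) ^ ((Finset.univ.filter (f · = v)).card - 1) *
    ((Finset.univ.filter (f · = v)).card - 1).factorial

lemma sum_mobiusFromBot_smul_xi_eq_zero :
    ∑ j, (mobiusFromBot (partitionLabels4 j) : ℂ) • xi 3 (partOf (partitionLabels4 j)) = 0 := by
  funext i
  have hδ : ∑ j, mobiusFromBot (partitionLabels4 j) *
      (if ∀ x y, partitionLabels4 j x = partitionLabels4 j y → i x = i y then 1 else 0) = 0 := by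
    revert i
    decide
  simp only [Finset.sum_apply, Pi.smul_apply, xi_partOf_apply, smul_eq_mul, Pi.zero_apply]
  exact_mod_cast hδ

/-- at parameter `N = 3`, the vector of the crossing partition
`{{1,3},{2,4}}` of `[4]` (in `Fin 4`: `x ∼ y` iff `x ≡ y (mod 2)`) lies in the
span of the noncrossing-partition vectors. -/
theorem stmt8 (c : Finpartition (Finset.univ : Finset (Fin 4)))
    (hc : ∀ x y : Fin 4, PartRel c x y ↔ (x : ℕ) % 2 = (y : ℕ) % 2) :
    xi 3 c ∈ ncSpan 3 4 := by
  have hxc : xi 3 c = xi 3 (partOf (partitionLabels4 0)) :=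
    xi_eq_of_partRel_iff fun x y => by
      rw [hc, partRel_partOf]
      revert x y
      decide
  have hμc : mobiusFromBot (partitionLabels4 0) = 1 := by decide
  have hrel := sum_mobiusFromBot_smul_xi_eq_zero
  rw [Fin.sum_univ_succ, hμc, Int.cast_one, one_smul, ← hxc, add_eq_zero_iff_eq_neg] at hrel
  rw [hrel]
  refine neg_mem (Submodule.sum_mem _ fun j _ => Submodule.smul_mem _ _ (xi_partOf_mem_ncSpan ?_))
  revert j
  decide
end

section
/- At parameter N = 4, the vector η = (∑_{p ∈ CR(5), |p| = 3} ξ_p) − 2 (∑_{p ∈ CR(5), |p| = 2} ξ_p) lies in the span of the noncrossing-partition vectors: η ∈ span{ξ_p : p ∈ NC(5)} inside ((Fin 5 → Fin 4) → ℂ). -/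
open scoped Classical

/-!
For `N < k` every index tuple `i : Fin k → Fin N` repeats a value, so the matrix
`([i x = i y])_{x,y}` has two equal rows and its determinant `∑_σ sign σ [i ∘ σ = i]` vanishes.
As `[i ∘ σ = i] = ξ_{c(σ)}(i)`, where `c(σ)` is the partition into cycles of `σ`, grouping the
permutations by `c(σ)` gives the relation `∑_p μ_p ξ_p = 0`, with `μ_p = cycleCoeff p` the
signed number of permutations whose cycle partition is `p` (the Möbius function `μ(0̂, p)` of
the partition lattice). Hence the crossing part of this relation lies in the noncrossing span.
For `k = 5` the crossing partitions have block sizes `2,2,1` or `3,2`, where `μ_p = 1` and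
`μ_p = -2`, so the crossing part is exactly `η`.
-/

open Equiv Equiv.Perm Finset

section Labelling

variable {k : ℕ} {p q : Finpartition (univ : Finset (Fin k))} {x y : Fin k}

lemma partRel_iff_mem_part : PartRel p x y ↔ y ∈ p.part x := by
  rw [Finpartition.mem_part_iff_exists]
  exact exists_congr fun _ => and_congr_right fun _ => and_comm

lemma partRel_iff_part_eq : PartRel p x y ↔ p.part x = p.part y := by
  rw [partRel_iff_mem_part, p.mem_part_iff_part_eq_part (mem_univ y) (mem_univ x), eq_comm]

lemma Finpartition.parts_eq_image_part {α : Type*} [Fintype α] [DecidableEq α]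
    (p : Finpartition (univ : Finset α)) :
    p.parts = univ.image p.part := by
  ext t
  refine ⟨fun ht => ?_, fun ht => ?_⟩
  · obtain ⟨x, hx⟩ := p.nonempty_of_mem_parts ht
    exact mem_image.2 ⟨x, mem_univ x, p.part_eq_of_mem ht hx⟩
  · obtain ⟨x, -, rfl⟩ := mem_image.1 ht
    exact p.part_mem.2 (mem_univ x)

lemma eq_of_partRel_iff (h : ∀ x y, PartRel p x y ↔ PartRel q x y) : p = q := by
  have hpart : p.part = q.part := funext fun x => Finset.ext fun y => by
    rw [← partRel_iff_mem_part, ← partRel_iff_mem_part, h]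
  ext1
  rw [p.parts_eq_image_part, q.parts_eq_image_part, hpart]

noncomputable def blockMin (p : Finpartition (univ : Finset (Fin k))) (x : Fin k) : Fin k :=
  (p.part x).min' ⟨x, p.mem_part (mem_univ x)⟩

lemma blockMin_mem_part : blockMin p x ∈ p.part x := min'_mem _ _

lemma blockMin_le : blockMin p x ≤ x := min'_le _ _ (p.mem_part (mem_univ x))

lemma blockMin_eq_blockMin_iff_part_eq : blockMin p x = blockMin p y ↔ p.part x = p.part y := by
  refine ⟨fun h => ?_, fun h => by unfold blockMin; congr 1⟩
  rw [← p.part_eq_of_mem (p.part_mem.2 (mem_univ x)) blockMin_mem_part, h,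
    p.part_eq_of_mem (p.part_mem.2 (mem_univ y)) blockMin_mem_part]

lemma blockMin_eq_blockMin_iff : blockMin p x = blockMin p y ↔ PartRel p x y := by
  rw [blockMin_eq_blockMin_iff_part_eq, partRel_iff_part_eq]

lemma blockMin_blockMin : blockMin p (blockMin p x) = blockMin p x :=
  (blockMin_eq_blockMin_iff.2 (partRel_iff_mem_part.2 blockMin_mem_part)).symm

lemma card_image_eq_card_image_of_eq_iff {α β γ : Type*} [DecidableEq β] [DecidableEq γ]
    {s : Finset α} {f : α → β} {g : α → γ} (h : ∀ x y, f x = f y ↔ g x = g y) :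
    #(s.image f) = #(s.image g) := by
  refine card_bij (fun b hb => g (mem_image.1 hb).choose)
    (fun b hb => mem_image_of_mem g (mem_image.1 hb).choose_spec.1) ?_ ?_
  · intro b hb b' hb' hg
    rw [← (mem_image.1 hb).choose_spec.2, ← (mem_image.1 hb').choose_spec.2]
    exact (h _ _).2 hg
  · intro c hc
    obtain ⟨x, hx, rfl⟩ := mem_image.1 hc
    have hfx : f x ∈ s.image f := mem_image_of_mem f hx
    exact ⟨f x, hfx, (h _ _).1 (mem_image.1 hfx).choose_spec.2⟩

lemma card_parts_eq_card_image_blockMin : #p.parts = #(univ.image (blockMin p)) := by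
  rw [p.parts_eq_image_part]
  exact card_image_eq_card_image_of_eq_iff fun _ _ => blockMin_eq_blockMin_iff_part_eq.symm

lemma cr_nonempty_iff_blockMin : (cr p).Nonempty ↔
    ∃ a b c d : Fin k, a < b ∧ b < c ∧ c < d ∧
      blockMin p a = blockMin p c ∧ blockMin p b = blockMin p d ∧
      blockMin p a ≠ blockMin p b := by
  simp only [ne_eq, blockMin_eq_blockMin_iff]
  exact ⟨fun ⟨_, a, b, c, d, hab, hbc, hcd, _, hac, hbd, hab'⟩ =>
      ⟨a, b, c, d, hab, hbc, hcd, hac, hbd, hab'⟩,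
    fun ⟨a, b, c, d, hab, hbc, hcd, hac, hbd, hab'⟩ =>
      ⟨_, a, b, c, d, hab, hbc, hcd, rfl, hac, hbd, hab'⟩⟩

end Labelling

section CyclePartition

variable {k N : ℕ}

noncomputable def cyclePartition (σ : Perm (Fin k)) : Finpartition (univ : Finset (Fin k)) :=
  Finpartition.ofSetoid (SameCycle.setoid σ)

lemma partRel_cyclePartition {σ : Perm (Fin k)} {x y : Fin k} :
    PartRel (cyclePartition σ) x y ↔ σ.SameCycle x y := by
  rw [partRel_iff_mem_part, cyclePartition, Finpartition.mem_part_ofSetoid_iff_rel]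
  rfl

lemma cyclePartition_eq_iff {σ : Perm (Fin k)} {p : Finpartition (univ : Finset (Fin k))} :
    cyclePartition σ = p ↔ ∀ x y, σ.SameCycle x y ↔ PartRel p x y := by
  refine ⟨?_, fun h => eq_of_partRel_iff fun x y => partRel_cyclePartition.trans (h x y)⟩
  rintro rfl x y
  exact partRel_cyclePartition.symm

lemma Equiv.Perm.SameCycle.apply_eq_of_comp_eq_self {α β : Type*} [Finite α] {σ : Perm α}
    {i : α → β} (hi : i ∘ σ = i) {x y : α} (h : σ.SameCycle x y) : i x = i y := by
  obtain ⟨n, -, rfl⟩ := h.exists_nat_pow_eq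
  clear h
  induction n with
  | zero => rfl
  | succ n ih => rw [pow_succ', Perm.mul_apply, ih]; exact (congrFun hi _).symm

lemma xi_cyclePartition (σ : Perm (Fin k)) (i : Fin k → Fin N) :
    xi N (cyclePartition σ) i = if i ∘ σ = i then 1 else 0 := by
  refine if_congr ?_ rfl rfl
  simp only [partRel_cyclePartition]
  exact ⟨fun h => funext fun x => (h x (σ x) (sameCycle_apply_right.2 (.refl _ _))).symm,
    fun h x y hxy => hxy.apply_eq_of_comp_eq_self h⟩

theorem sum_sign_of_comp_eq_self_eq_zero {α β : Type*} [Fintype α] [DecidableEq α]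
    [DecidableEq β] {i : α → β} (hi : ¬ Function.Injective i) :
    ∑ σ ∈ univ.filter (fun σ : Perm α => i ∘ σ = i), ((sign σ : ℤ) : ℂ) = 0 := by
  obtain ⟨x, y, hixy, hxy⟩ := Function.not_injective_iff.1 hi
  have hdet := Matrix.det_zero_of_row_eq
    (M := Matrix.of fun a b => if i a = i b then (1 : ℂ) else 0) hxy
    (funext fun b => by simp [hixy])
  rw [Matrix.det_apply] at hdet
  rw [sum_filter]
  refine (sum_congr rfl fun σ _ => ?_).trans hdet
  simp [prod_boole, funext_iff, Units.smul_def]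

theorem sum_sign_smul_xi_cyclePartition (hN : N < k) :
    ∑ σ : Perm (Fin k), ((sign σ : ℤ) : ℂ) • xi N (cyclePartition σ) = 0 := by
  funext i
  have hi : ¬ Function.Injective i := fun h =>
    hN.not_ge (by simpa using Fintype.card_le_of_injective i h)
  simp only [Finset.sum_apply, Pi.smul_apply, xi_cyclePartition, smul_eq_mul, mul_ite, mul_one,
    mul_zero, ← sum_filter, Pi.zero_apply]
  exact sum_sign_of_comp_eq_self_eq_zero hi

noncomputable def cycleCoeff (p : Finpartition (univ : Finset (Fin k))) : ℤ :=
  ∑ σ ∈ univ.filter (fun σ => cyclePartition σ = p), (sign σ : ℤ)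

theorem sum_cycleCoeff_smul_xi (hN : N < k) :
    ∑ p : Finpartition (univ : Finset (Fin k)), (cycleCoeff p : ℂ) • xi N p = 0 := by
  rw [← sum_sign_smul_xi_cyclePartition hN, ← sum_fiberwise univ cyclePartition]
  refine sum_congr rfl fun p _ => ?_
  rw [cycleCoeff, Int.cast_sum, sum_smul]
  exact sum_congr rfl fun σ hσ => by rw [(mem_filter.1 hσ).2]

theorem sum_crossing_cycleCoeff_smul_xi_mem_ncSpan (hN : N < k) :
    ∑ p : Finpartition (univ : Finset (Fin k)),
      (if (cr p).Nonempty then (cycleCoeff p : ℂ) • xi N p else 0) ∈ ncSpan N k := by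
  have hsplit : ∑ p : Finpartition (univ : Finset (Fin k)),
      (if (cr p).Nonempty then (cycleCoeff p : ℂ) • xi N p else 0) =
      -∑ p : Finpartition (univ : Finset (Fin k)),
        (if (cr p).Nonempty then 0 else (cycleCoeff p : ℂ) • xi N p) := by
    rw [eq_neg_iff_add_eq_zero, ← sum_add_distrib]
    refine (sum_congr rfl fun p _ => ?_).trans (sum_cycleCoeff_smul_xi hN)
    split_ifs <;> simp
  rw [hsplit]
  refine neg_mem (sum_mem fun p _ => ?_)
  split_ifs with hp
  · exact zero_mem _
  · exact Submodule.smul_mem _ _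
      (Submodule.subset_span ⟨p, Set.not_nonempty_iff_eq_empty.1 hp, rfl⟩)

end CyclePartition

def cycleCoeffOfLabel {k : ℕ} {β : Type*} [DecidableEq β] (g : Fin k → β) : ℤ :=
  ∑ σ : Perm (Fin k), if ∀ x y, σ.SameCycle x y ↔ g x = g y then (sign σ : ℤ) else 0

lemma cycleCoeff_eq_cycleCoeffOfLabel_blockMin {k : ℕ}
    (p : Finpartition (univ : Finset (Fin k))) :
    cycleCoeff p = cycleCoeffOfLabel (blockMin p) := by
  rw [cycleCoeff, sum_filter]
  refine sum_congr rfl fun σ _ => if_congr ?_ rfl rfl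
  simp only [cyclePartition_eq_iff, blockMin_eq_blockMin_iff]

/-- The labellings with `g x ≤ x` and `g (g x) = g x` are exactly the `blockMin p`, so the
computation runs over the 52 partitions of `Fin 5` only. -/
theorem cycleCoeffOfLabel_of_crossing :
    ∀ g : Fin 5 → Fin 5, (∀ x, g x ≤ x ∧ g (g x) = g x) →
    (∃ a b c d : Fin 5, a < b ∧ b < c ∧ c < d ∧ g a = g c ∧ g b = g d ∧ g a ≠ g b) →
    cycleCoeffOfLabel g =
      (if #(univ.image g) = 3 then 1 else 0) - 2 * (if #(univ.image g) = 2 then 1 else 0) := by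
  decide +kernel

theorem cycleCoeff_of_cr_nonempty (p : Finpartition (univ : Finset (Fin 5)))
    (hp : (cr p).Nonempty) :
    cycleCoeff p = (if #p.parts = 3 then 1 else 0) - 2 * (if #p.parts = 2 then 1 else 0) := by
  rw [cycleCoeff_eq_cycleCoeffOfLabel_blockMin, card_parts_eq_card_image_blockMin]
  exact cycleCoeffOfLabel_of_crossing _ (fun _ => ⟨blockMin_le, blockMin_blockMin⟩)
    (cr_nonempty_iff_blockMin.1 hp)

/-- at parameter `N = 4`, the vector
`η = ∑_{p ∈ CR(5), |p| = 3} ξ_p − 2 ∑_{p ∈ CR(5), |p| = 2} ξ_p`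
lies in the span of the noncrossing-partition vectors. -/
theorem stmt11 :
    (∑ p : Finpartition (Finset.univ : Finset (Fin 5)),
        if (cr p).Nonempty ∧ p.parts.card = 3 then xi 4 p else 0)
      - (2 : ℂ) • (∑ p : Finpartition (Finset.univ : Finset (Fin 5)),
        if (cr p).Nonempty ∧ p.parts.card = 2 then xi 4 p else 0)
      ∈ ncSpan 4 5 := by
  convert sum_crossing_cycleCoeff_smul_xi_mem_ncSpan (N := 4) (k := 5) (by norm_num) using 1
  rw [smul_sum, ← sum_sub_distrib]
  refine sum_congr rfl fun p _ => ?_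
  by_cases hp : (cr p).Nonempty
  · rw [if_pos hp, cycleCoeff_of_cr_nonempty p hp]
    split_ifs <;> simp_all
  · simp [hp]
end
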